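/- Let X₁, X₂, … be i.i.d. random variables with P(X₁ = 2) = 1/2, P(X₁ = −1) = 1/4 and P(X₁ = −3) = 1/4, and let S_t be the associated random walk. Then the expected number of crossings of level 1 satisfies E L_1 = 1/2. -/

import Mathlib

open MeasureTheory ProbabilityTheory Filter

noncomputable section

variable {Ω : Type*} [MeasurableSpace Ω]

/-- Conditional expectation of `f` given the event `A`. -/
def cexp (μ : Measure Ω) (A : Set Ω) (f : Ω → ℝ) : ℝ :=
  (∫ ω in A, f ω ∂μ) / (μ A).toReal

/-- Partial sums of the steps: `pS X t = X 0 + ⋯ + X (t-1)`, i.e. the walk `S_t`, where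
`X i` stands for the step `X_{i+1}` of the paper. -/
def pS (X : ℕ → Ω → ℝ) : ℕ → Ω → ℝ
  | 0 => fun _ => 0
  | (t + 1) => fun ω => pS X t ω + X t ω

/-- The stopping time `τ`: the first time `t > 1` with `S_t ≤ 0` if `X₁ > 0`, and `1`
otherwise. -/
def tauRW (X : ℕ → Ω → ℝ) (ω : Ω) : ℕ∞ :=
  if 0 < X 0 ω then sInf {n : ℕ∞ | ∃ t : ℕ, n = (t : ℕ∞) ∧ 1 < t ∧ pS X t ω ≤ 0}
  else 1

/-- The number of level-crossings `L_α`: the number of `t ∈ {1, …, τ}` with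
`S_{t-1} < α` and `S_t ≥ α`. -/
def nCross (X : ℕ → Ω → ℝ) (α : ℝ) (ω : Ω) : ℕ :=
  Set.ncard {t : ℕ | 1 ≤ t ∧ (t : ℕ∞) ≤ tauRW X ω ∧ pS X (t - 1) ω < α ∧ α ≤ pS X t ω}

/-- The expected number of level-crossings `E L_α`. -/
def EL (μ : Measure Ω) (X : ℕ → Ω → ℝ) (α : ℝ) : ℝ :=
  ∫ ω, (nCross X α ω : ℝ) ∂μ

/-- The value `S_τ` of the walk at the stopping time (junk value `0` if `τ = ∞`). -/
def Stau (X : ℕ → Ω → ℝ) (ω : Ω) : ℝ :=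
  pS X (tauRW X ω).toNat ω

/-- The pair `(t_i(α), τ_i(α))` of the `i`-th crossing time and the `i`-th descent time
(junk values given by `sInf ∅ = 0` when they do not exist). -/
def cdTimes (X : ℕ → Ω → ℝ) (α : ℝ) : ℕ → Ω → ℕ × ℕ
  | 0 => fun _ => (0, 0)
  | (i + 1) => fun ω =>
      let t := sInf {t : ℕ | (cdTimes X α i ω).2 < t ∧ (t : ℕ∞) ≤ tauRW X ω ∧ α ≤ pS X t ω}
      (t, sInf {s : ℕ | t < s ∧ pS X s ω < α})

/-- The event `𝔄_i(α)`: the `i`-th crossing of the level `α` occurs during `[0, τ]`. -/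
def crossEv (X : ℕ → Ω → ℝ) (α : ℝ) : ℕ → Set Ω
  | 0 => Set.univ
  | (i + 1) => crossEv X α i ∩
      {ω | ∃ t : ℕ, (cdTimes X α i ω).2 < t ∧ (t : ℕ∞) ≤ tauRW X ω ∧ α ≤ pS X t ω}

/-- Assumption 1 of the paper at the level `α`: `P(𝔄₂(α)) > 0`,
`E[S_{t₁(α)-1} ∣ 𝔄₁(α)] > 0`, `E[S_{τ₁(α)} ∣ 𝔄₁(α)] > 0`,
`E[S_{t₂(α)-1} ∣ 𝔄₂(α)] = E[S_{t₁(α)-1} ∣ 𝔄₁(α)]` and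
`E[S_{τ₂(α)} ∣ 𝔄₂(α)] = E[S_{τ₁(α)} ∣ 𝔄₁(α)]`. -/
def Assumption1 (μ : Measure Ω) (X : ℕ → Ω → ℝ) (α : ℝ) : Prop :=
  0 < μ (crossEv X α 2) ∧
  0 < cexp μ (crossEv X α 1) (fun ω => pS X ((cdTimes X α 1 ω).1 - 1) ω) ∧
  0 < cexp μ (crossEv X α 1) (fun ω => pS X ((cdTimes X α 1 ω).2) ω) ∧
  cexp μ (crossEv X α 2) (fun ω => pS X ((cdTimes X α 2 ω).1 - 1) ω)
    = cexp μ (crossEv X α 1) (fun ω => pS X ((cdTimes X α 1 ω).1 - 1) ω) ∧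
  cexp μ (crossEv X α 2) (fun ω => pS X ((cdTimes X α 2 ω).2) ω)
    = cexp μ (crossEv X α 1) (fun ω => pS X ((cdTimes X α 1 ω).2) ω)

/-
The steps are almost surely integers, so after a first step `X₁ = 2` the walk can only
fall below the level `1` by entering `(-∞, 0]`, which stops it; and after a first step `X₁ < 0` it
stops at once. Hence `L₁ = 1{X₁ = 2}` almost surely and `E L₁ = P(X₁ = 2) = 1/2`.
-/

section Walk

variable {Ω' : Type*} {X : ℕ → Ω' → ℝ} {ω : Ω'}

lemma pS_one : pS X 1 ω = X 0 ω :=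
  zero_add _

lemma exists_int_pS_eq (hX : ∀ i, ∃ k : ℤ, X i ω = k) (t : ℕ) : ∃ k : ℤ, pS X t ω = k := by
  induction t with
  | zero => exact ⟨0, by simp [pS]⟩
  | succ t ih =>
    obtain ⟨k, hk⟩ := ih
    obtain ⟨m, hm⟩ := hX t
    exact ⟨k + m, by simp [pS, hk, hm]⟩

lemma one_le_tauRW : 1 ≤ tauRW X ω := by
  unfold tauRW
  split_ifs
  · refine le_sInf ?_
    rintro _ ⟨t, rfl, ht, -⟩
    exact_mod_cast ht.le
  · exact le_rfl

lemma tauRW_eq_one_of_nonpos (h : X 0 ω ≤ 0) : tauRW X ω = 1 := by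
  rw [tauRW, if_neg h.not_gt]

lemma tauRW_le_of_pS_nonpos (h : 0 < X 0 ω) {t : ℕ} (ht : 1 < t) (hS : pS X t ω ≤ 0) :
    tauRW X ω ≤ t := by
  rw [tauRW, if_pos h]
  exact sInf_le ⟨t, rfl, ht, hS⟩

lemma crossings_eq_of_int (hS : ∀ t, ∃ k : ℤ, pS X t ω = k) {α : ℝ} (hα0 : 0 < α)
    (hα1 : α ≤ 1) :
    {t : ℕ | 1 ≤ t ∧ (t : ℕ∞) ≤ tauRW X ω ∧ pS X (t - 1) ω < α ∧ α ≤ pS X t ω} =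
      if 0 < X 0 ω then {1} else ∅ := by
  have nonpos_of_lt : ∀ t, pS X t ω < α → pS X t ω ≤ 0 := fun t hlt ↦ by
    obtain ⟨k, hk⟩ := hS t
    rw [hk] at hlt ⊢
    exact_mod_cast Int.lt_add_one_iff.mp (by exact_mod_cast hlt.trans_le hα1)
  ext t
  split_ifs with hX
  · simp only [Set.mem_ofPred_eq, Set.mem_singleton_iff]
    constructor
    · rintro ⟨ht1, hτ, hlt, -⟩
      by_contra hne
      have hle := nonpos_of_lt _ hlt
      have hne1 : t - 1 ≠ 1 := fun h ↦ by rw [h, pS_one] at hle; linarith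
      have : (t : ℕ∞) ≤ (t - 1 : ℕ) := hτ.trans (tauRW_le_of_pS_nonpos hX (by omega) hle)
      have : t ≤ t - 1 := by exact_mod_cast this
      omega
    · rintro rfl
      refine ⟨le_rfl, one_le_tauRW, by simpa [pS] using hα0, ?_⟩
      obtain ⟨k, hk⟩ := hS 1
      rw [pS_one] at hk
      rw [pS_one, hk]
      have : (0 : ℤ) < k := by rw [hk] at hX; exact_mod_cast hX
      exact hα1.trans (by exact_mod_cast this)
  · simp only [Set.mem_ofPred_eq, Set.mem_empty_iff_false, iff_false]
    rintro ⟨ht1, hτ, -, hge⟩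
    rw [tauRW_eq_one_of_nonpos (not_lt.mp hX)] at hτ
    obtain rfl : t = 1 := le_antisymm (by exact_mod_cast hτ) ht1
    rw [pS_one] at hge
    linarith

lemma nCross_eq_of_int (hX : ∀ i, ∃ k : ℤ, X i ω = k) {α : ℝ} (hα0 : 0 < α) (hα1 : α ≤ 1) :
    nCross X α ω = if 0 < X 0 ω then 1 else 0 := by
  rw [nCross, crossings_eq_of_int (exists_int_pS_eq hX) hα0 hα1]
  split_ifs <;> simp

end Walk

lemma ae_mem_of_sum_measure_eq_one {β : Type*} [MeasurableSpace β] [MeasurableSingletonClass β]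
    {μ : Measure Ω} [IsProbabilityMeasure μ] {Y : Ω → β} (hY : Measurable Y) (s : Finset β)
    (hs : ∑ y ∈ s, μ {ω | Y ω = y} = 1) : ∀ᵐ ω ∂μ, Y ω ∈ (s : Set β) := by
  rw [ae_iff_measure_eq (hY s.measurableSet).nullMeasurableSet, measure_univ, ← hs]
  exact (sum_measure_preimage_singleton s fun y _ ↦ hY (measurableSet_singleton y)).symm

theorem stmt13_general (μ : Measure Ω) [IsProbabilityMeasure μ]
    (X : ℕ → Ω → ℝ) (hmeas : ∀ i, Measurable (X i))
    (hident : ∀ i, IdentDistrib (X i) (X 0) μ μ)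
    (h1 : μ {ω | X 0 ω = 2} = 1 / 2) (h2 : μ {ω | X 0 ω = -1} = 1 / 4)
    (h3 : μ {ω | X 0 ω = -3} = 1 / 4) :
    EL μ X 1 = 1 / 2 := by
  set V : Finset ℝ := {2, -1, -3}
  have hV0 : ∀ᵐ ω ∂μ, X 0 ω ∈ (V : Set ℝ) := by
    refine ae_mem_of_sum_measure_eq_one (hmeas 0) V ?_
    rw [Finset.sum_insert (by norm_num), Finset.sum_insert (by norm_num), Finset.sum_singleton,
      h1, h2, h3, ← ENNReal.toReal_eq_toReal_iff' (by simp) (by simp)]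
    norm_num [ENNReal.toReal_add]
  have hae : ∀ᵐ ω ∂μ, ∀ i, X i ω ∈ (V : Set ℝ) :=
    ae_all_iff.mpr fun i ↦ (hident i).symm.ae_mem_snd V.measurableSet hV0
  have hcross : (fun ω ↦ (nCross X 1 ω : ℝ)) =ᵐ[μ] {ω | X 0 ω = 2}.indicator 1 := by
    filter_upwards [hae] with ω hω
    have hω' (i : ℕ) : X i ω = 2 ∨ X i ω = -1 ∨ X i ω = -3 := by simpa [V] using hω i
    have hint (i : ℕ) : ∃ k : ℤ, X i ω = k := by
      rcases hω' i with h | h | h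
      exacts [⟨2, by simp [h]⟩, ⟨-1, by simp [h]⟩, ⟨-3, by simp [h]⟩]
    rw [nCross_eq_of_int hint one_pos le_rfl]
    rcases hω' 0 with h | h | h <;> norm_num [h, Set.indicator]
  rw [EL, integral_congr_ae hcross,
    integral_indicator_one (s := {ω | X 0 ω = 2}) (hmeas 0 (measurableSet_singleton 2)),
    measureReal_def, h1]
  simp

/-- For the random walk whose step takes the value `2` with probability
`1/2`, the value `-1` with probability `1/4` and the value `-3` with probability `1/4`,
one has `E L_1 = 1/2`. -/
theorem stmt13 (μ : Measure Ω) [IsProbabilityMeasure μ]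
    (X : ℕ → Ω → ℝ) (hmeas : ∀ i, Measurable (X i))
    (hindep : iIndepFun X μ)
    (hident : ∀ i, IdentDistrib (X i) (X 0) μ μ)
    (h1 : μ {ω | X 0 ω = 2} = 1 / 2) (h2 : μ {ω | X 0 ω = -1} = 1 / 4)
    (h3 : μ {ω | X 0 ω = -3} = 1 / 4) :
    EL μ X 1 = 1 / 2 :=
  stmt13_general μ X hmeas hident h1 h2 h3

end
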